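/- arXiv:1904.09417 — 2 statements merged into one kernel-verified Lean document; each statement's English description precedes it below -/
import Mathlib

section
/- Let f : [0,1] → ℝ be continuous with f(0), f(1) ∈ ℤ, and let n ≥ 1. Then for every x ∈ [0,1], |B̃_n(f)(x) - B_n f(x)| ≤ 1/n, where B̃_n(f)(x) = Σ_{k=0}^n ⌊f(k/n) C(n,k)⌋ x^k (1-x)^{n-k}. -/
/-!
Write `a_k = f(k/n) C(n,k)`. Rounding changes the `k`-th coefficient by `⌊a_k⌋ - a_k`, which
vanishes for `k = 0, n` because `f(0), f(1)` are integers, and has absolute value at most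
`1 ≤ C(n,k)/n` for `0 < k < n`. Hence the error is at most
`∑ₖ C(n,k)/n · xᵏ(1-x)ⁿ⁻ᵏ = (x + (1-x))ⁿ / n = 1/n`.
-/

open Finset

theorem Nat.le_choose_of_pos_of_lt {n k : ℕ} (hk : 0 < k) (hkn : k < n) : n ≤ n.choose k := by
  induction n with
  | zero => omega
  | succ n ih =>
    obtain ⟨j, rfl⟩ := Nat.exists_eq_add_one_of_ne_zero hk.ne'
    rw [Nat.choose_succ_succ']
    rcases (Nat.lt_succ_iff.mp hkn).eq_or_lt with rfl | hjn
    · rw [Nat.choose_succ_self_right, Nat.choose_self]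
    · have hpos : 0 < n.choose j := Nat.choose_pos (by omega)
      have hle : n ≤ n.choose (j + 1) := ih hjn
      omega

theorem Int.abs_floor_sub_lt_one {α : Type*} [Ring α] [LinearOrder α] [IsStrictOrderedRing α]
    [FloorRing α] (a : α) : |(⌊a⌋ : α) - a| < 1 := by
  rw [abs_sub_comm, ← Int.fract, Int.abs_fract]
  exact Int.fract_lt_one a

theorem sum_choose_div_mul_pow_mul_pow (n : ℕ) (x : ℝ) :
    ∑ k ∈ range (n + 1), (n.choose k / n : ℝ) * (x ^ k * (1 - x) ^ (n - k)) = 1 / n := by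
  calc _ = (∑ k ∈ range (n + 1), x ^ k * (1 - x) ^ (n - k) * n.choose k) / n := by
        rw [sum_div]
        exact sum_congr rfl fun k _ => by ring
    _ = 1 / n := by rw [← add_pow, add_sub_cancel, one_pow]

theorem abs_floor_bernstein_coeff_sub_le {f : ℝ → ℝ} (h0 : ∃ m : ℤ, f 0 = m)
    (h1 : ∃ m : ℤ, f 1 = m) {n k : ℕ} (hkn : k ≤ n) :
    |(⌊f (k / n) * n.choose k⌋ : ℝ) - f (k / n) * n.choose k| ≤ n.choose k / n := by
  rcases Nat.eq_zero_or_pos k with rfl | hk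
  · obtain ⟨m, hm⟩ := h0
    simp [hm]
  rcases hkn.eq_or_lt with rfl | hkn
  · obtain ⟨m, hm⟩ := h1
    have hk : (k : ℝ) ≠ 0 := by positivity
    simp [hk, hm]
  · have hn : (0 : ℝ) < n := by exact_mod_cast hk.trans hkn
    calc |(⌊f (k / n) * n.choose k⌋ : ℝ) - f (k / n) * n.choose k| ≤ 1 :=
          (Int.abs_floor_sub_lt_one _).le
      _ ≤ n.choose k / n := by
        rw [one_le_div hn]
        exact_mod_cast Nat.le_choose_of_pos_of_lt hk hkn

theorem floor_bernstein_close_general (f : ℝ → ℝ)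
    (h0 : ∃ m : ℤ, f 0 = (m : ℝ)) (h1 : ∃ m : ℤ, f 1 = (m : ℝ))
    (n : ℕ) (x : ℝ) (hx : x ∈ Set.Icc (0 : ℝ) 1) :
    |(∑ k ∈ Finset.range (n + 1),
        ((⌊f ((k : ℝ) / n) * (n.choose k : ℝ)⌋ : ℝ)) * x ^ k * (1 - x) ^ (n - k)) -
      (∑ k ∈ Finset.range (n + 1),
        f ((k : ℝ) / n) * (n.choose k : ℝ) * x ^ k * (1 - x) ^ (n - k))| ≤ 1 / n := by
  rw [← sum_choose_div_mul_pow_mul_pow n x, ← sum_sub_distrib]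
  refine (abs_sum_le_sum_abs _ _).trans (sum_le_sum fun k hk => ?_)
  have hweight : 0 ≤ x ^ k * (1 - x) ^ (n - k) :=
    mul_nonneg (pow_nonneg hx.1 k) (pow_nonneg (sub_nonneg.mpr hx.2) (n - k))
  calc _ = |(⌊f (k / n) * n.choose k⌋ : ℝ) - f (k / n) * n.choose k| *
        (x ^ k * (1 - x) ^ (n - k)) := by rw [← abs_of_nonneg hweight, ← abs_mul]; ring_nf
    _ ≤ _ := mul_le_mul_of_nonneg_right
        (abs_floor_bernstein_coeff_sub_le h0 h1 (Nat.lt_succ_iff.mp (mem_range.mp hk))) hweight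

theorem floor_bernstein_close (f : ℝ → ℝ) (hf : ContinuousOn f (Set.Icc 0 1))
    (h0 : ∃ m : ℤ, f 0 = (m : ℝ)) (h1 : ∃ m : ℤ, f 1 = (m : ℝ))
    (n : ℕ) (hn : 1 ≤ n) (x : ℝ) (hx : x ∈ Set.Icc (0 : ℝ) 1) :
    |(∑ k ∈ Finset.range (n + 1),
        ((⌊f ((k : ℝ) / n) * (n.choose k : ℝ)⌋ : ℝ)) * x ^ k * (1 - x) ^ (n - k)) -
      (∑ k ∈ Finset.range (n + 1),
        f ((k : ℝ) / n) * (n.choose k : ℝ) * x ^ k * (1 - x) ^ (n - k))| ≤ 1 / n :=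
  floor_bernstein_close_general f h0 h1 n x hx
end

section
/- Let s ≥ 1, n ≥ s+1, f ∈ C^s[0,1] and g ∈ C^{s+1}[0,1]. Suppose that for each k = 0, ..., n, the coefficient b(k) satisfies |f(k/n) - b(k)| ≤ M/n^s for some M > 0, and define Q(x) = Σ_{k=0}^n b(k) C(n,k) x^k (1-x)^{n-k}. Then for all x ∈ [0,1], |Q^{(s+1)}(x) - (B_n g)^{(s+1)}(x)| ≤ (2n)^{s+1}·(M/n^s) + n^{s+1}·sup_{y∈[0,1-(s+1)/n]}|Δ_{1/n}^{s+1}(f-g)(y)| ≤ (2n)^{s+1}·(M/n^s) + 2n·‖f^{(s)} - g^{(s)}‖_∞. -/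
open Finset Polynomial
open scoped fwdDiff

/-!
The `j`-th derivative of `∑ c k • bernsteinPolynomial n k` is
`n (n - 1) ⋯ (n - j + 1) • ∑ (Δ^j c) k • bernsteinPolynomial (n - j) k`, and since the Bernstein
basis is a nonnegative partition of unity on `[0, 1]`, its size there is at most
`n ^ j * max_k |Δ^j c k|`. For `c = b - g(·/n)` split `c = (b - f(·/n)) + (f - g)(·/n)`: the `j`-th
differences of the first part are at most `2 ^ j * M / n ^ s`, those of the second are the values
of `Δ_{1/n}^j (f - g)` at the nodes. Finally `Δ_h^{s+1} = Δ_h (Δ_h^s)` and, by the mean value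
theorem applied `s` times, `|Δ_h^s φ| ≤ h ^ s * sup |φ^{(s)}|`.
-/

/-- (s+1)-th forward difference with step h. -/
noncomputable def fwdDiffStep (s : ℕ) (h : ℝ) (f : ℝ → ℝ) (x : ℝ) : ℝ :=
  ∑ i ∈ Finset.range (s + 1), (-1 : ℝ) ^ i * (s.choose i : ℝ) * f (x + ((s : ℝ) - i) * h)

section ForwardDifference

lemma fwdDiffStep_eq_fwdDiff_iter (m : ℕ) (h : ℝ) (φ : ℝ → ℝ) (x : ℝ) :
    fwdDiffStep m h φ x = (Δ_[h])^[m] φ x := by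
  rw [fwdDiff_iter_eq_sum_shift, fwdDiffStep, ← sum_range_reflect]
  refine sum_congr rfl fun i hi => ?_
  have hi : i ≤ m := Nat.lt_succ_iff.mp (mem_range.mp hi)
  rw [Nat.add_sub_cancel, ← Nat.choose_symm hi, zsmul_eq_mul, nsmul_eq_mul, Nat.cast_sub hi]
  push_cast
  rw [sub_sub_cancel]

lemma fwdDiff_iter_comp_addMonoidHom {M M' G : Type*} [AddCommMonoid M] [AddCommMonoid M']
    [AddCommGroup G] (L : M →+ M') (φ : M' → G) (h : M) (m : ℕ) (y : M) :
    (Δ_[h])^[m] (φ ∘ L) y = (Δ_[L h])^[m] φ (L y) := by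
  simp [fwdDiff_iter_eq_sum_shift]

lemma abs_fwdDiff_iter_le {M : Type*} [AddCommMonoid M] (c : M → ℝ) (h : M) (m : ℕ) (y : M)
    {A : ℝ} (hA : ∀ i ≤ m, |c (y + i • h)| ≤ A) : |(Δ_[h])^[m] c y| ≤ 2 ^ m * A := by
  rw [fwdDiff_iter_eq_sum_shift]
  calc _ ≤ ∑ i ∈ range (m + 1), |((-1 : ℤ) ^ (m - i) * m.choose i) • c (y + i • h)| :=
        abs_sum_le_sum_abs _ _
    _ ≤ ∑ i ∈ range (m + 1), (m.choose i : ℝ) * A := by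
        gcongr with i hi
        rw [zsmul_eq_mul, abs_mul]
        push_cast
        rw [abs_mul, abs_pow, abs_neg, abs_one, one_pow, one_mul, Nat.abs_cast]
        exact mul_le_mul_of_nonneg_left (hA i (Nat.lt_succ_iff.mp (mem_range.mp hi)))
          (Nat.cast_nonneg _)
    _ = 2 ^ m * A := by
        rw [← sum_mul, ← Nat.cast_sum, Nat.sum_range_choose]
        push_cast
        ring

lemma hasDerivAt_fwdDiff_iter {𝕜 F : Type*} [NontriviallyNormedField 𝕜] [NormedAddCommGroup F]
    [NormedSpace 𝕜 F] {φ φ' : 𝕜 → F} (hφ : ∀ x, HasDerivAt φ (φ' x) x) (h : 𝕜) (m : ℕ)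
    (x : 𝕜) : HasDerivAt ((Δ_[h])^[m] φ) ((Δ_[h])^[m] φ' x) x := by
  induction m generalizing x with
  | zero => exact hφ x
  | succ m ih =>
    simp only [Function.iterate_succ_apply']
    exact ((ih (x + h)).comp_add_const x h).sub (ih x)

lemma abs_fwdDiff_iter_le_of_abs_iteratedDeriv_le {m : ℕ} {φ : ℝ → ℝ} (hφ : ContDiff ℝ m φ)
    {h E z : ℝ} (hh : 0 ≤ h) (hE : ∀ t ∈ Set.Icc z (z + m * h), |iteratedDeriv m φ t| ≤ E) :
    |(Δ_[h])^[m] φ z| ≤ E * h ^ m := by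
  induction m generalizing φ z with
  | zero => simpa using hE z (by simp)
  | succ m ih =>
    obtain ⟨hφ_diff, -, hφ'⟩ := (contDiff_succ_iff_deriv (n := m)).mp (by exact_mod_cast hφ)
    have hbound : ∀ t ∈ Set.Icc z (z + h), ‖(Δ_[h])^[m] (deriv φ) t‖ ≤ E * h ^ m := by
      refine fun t ht => ih hφ' fun u hu => ?_
      rw [← iteratedDeriv_succ']
      refine hE u ⟨ht.1.trans hu.1, ?_⟩
      push_cast
      linarith [ht.2, hu.2]
    have hderiv : ∀ t ∈ Set.Icc z (z + h),
        HasDerivWithinAt ((Δ_[h])^[m] φ) ((Δ_[h])^[m] (deriv φ) t) (Set.Icc z (z + h)) t :=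
      fun t _ => (hasDerivAt_fwdDiff_iter (fun x => (hφ_diff x).hasDerivAt) h m t).hasDerivWithinAt
    have hmvt := (convex_Icc z (z + h)).norm_image_sub_le_of_norm_hasDerivWithin_le hderiv hbound
      (Set.left_mem_Icc.mpr (by linarith)) (Set.right_mem_Icc.mpr (by linarith))
    rw [add_sub_cancel_left, Real.norm_eq_abs, Real.norm_eq_abs, abs_of_nonneg hh] at hmvt
    rw [Function.iterate_succ_apply', fwdDiff, pow_succ, ← mul_assoc]
    exact hmvt

lemma abs_fwdDiff_iter_succ_le_of_abs_iteratedDeriv_le {m : ℕ} {φ : ℝ → ℝ}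
    (hφ : ContDiff ℝ m φ) {h E z : ℝ} (hh : 0 ≤ h)
    (hE : ∀ t ∈ Set.Icc z (z + (m + 1) * h), |iteratedDeriv m φ t| ≤ E) :
    |(Δ_[h])^[m + 1] φ z| ≤ 2 * E * h ^ m := by
  have hright := abs_fwdDiff_iter_le_of_abs_iteratedDeriv_le hφ hh (z := z + h)
    fun t ht => hE t ⟨by linarith [ht.1], by linarith [ht.2]⟩
  have hleft := abs_fwdDiff_iter_le_of_abs_iteratedDeriv_le hφ hh (z := z)
    fun t ht => hE t ⟨ht.1, by linarith [ht.2]⟩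
  rw [Function.iterate_succ_apply', fwdDiff]
  linarith [abs_sub ((Δ_[h])^[m] φ (z + h)) ((Δ_[h])^[m] φ z)]

end ForwardDifference

lemma iteratedDeriv_eval {𝕜 : Type*} [NontriviallyNormedField 𝕜] (p : 𝕜[X]) (m : ℕ) :
    iteratedDeriv m (fun y => p.eval y) = fun y => (derivative^[m] p).eval y := by
  induction m with
  | zero => simp
  | succ m ih =>
    rw [iteratedDeriv_succ, ih, Function.iterate_succ_apply']
    exact funext fun y => Polynomial.deriv _

section Bernstein

variable {R : Type*} [CommRing R]

noncomputable def bernsteinSum (n : ℕ) (c : ℕ → R) : R[X] :=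
  ∑ k ∈ range (n + 1), c k • bernsteinPolynomial R n k

lemma eval_bernsteinSum (n : ℕ) (c : ℕ → R) (x : R) :
    (bernsteinSum n c).eval x =
      ∑ k ∈ range (n + 1), c k * (n.choose k : R) * x ^ k * (1 - x) ^ (n - k) := by
  simp only [bernsteinSum, eval_finsetSum, eval_smul, bernsteinPolynomial, eval_mul, eval_pow,
    eval_natCast, eval_X, eval_sub, eval_one, smul_eq_mul, mul_assoc]

lemma bernsteinSum_sub (n : ℕ) (c d : ℕ → R) :
    bernsteinSum n (c - d) = bernsteinSum n c - bernsteinSum n d := by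
  simp only [bernsteinSum, Pi.sub_apply, sub_smul, sum_sub_distrib]

lemma derivative_bernsteinSum_succ (m : ℕ) (c : ℕ → R) :
    derivative (bernsteinSum (m + 1) c) = (m + 1) • bernsteinSum m (Δ_[1] c) := by
  have hshift : ∑ k ∈ range (m + 1), c (k + 1) • bernsteinPolynomial R m (k + 1) +
      c 0 • bernsteinPolynomial R m 0 = ∑ k ∈ range (m + 1), c k • bernsteinPolynomial R m k := by
    rw [← sum_range_succ' (fun k => c k • bernsteinPolynomial R m k), sum_range_succ,
      bernsteinPolynomial.eq_zero_of_lt R (Nat.lt_succ_self m), smul_zero, add_zero]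
  rw [bernsteinSum, sum_range_succ', map_add, map_sum]
  simp only [derivative_smul, bernsteinPolynomial.derivative_succ,
    bernsteinPolynomial.derivative_zero, Nat.add_sub_cancel, ← nsmul_eq_mul, neg_mul, smul_neg,
    smul_comm _ (m + 1), ← smul_sum, bernsteinSum, fwdDiff, sub_smul, smul_sub, sum_sub_distrib,
    ← hshift]
  rw [smul_add]
  abel

lemma iterate_derivative_bernsteinSum {n j : ℕ} (hj : j ≤ n) (c : ℕ → R) :
    derivative^[j] (bernsteinSum n c) =
      n.descFactorial j • bernsteinSum (n - j) ((Δ_[1])^[j] c) := by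
  induction j with
  | zero => simp
  | succ j ih =>
    obtain ⟨m, hm⟩ : ∃ m, n - j = m + 1 := ⟨n - (j + 1), by omega⟩
    rw [Function.iterate_succ_apply', ih (by omega), map_nsmul, hm, derivative_bernsteinSum_succ,
      smul_smul, ← Function.iterate_succ_apply' (Δ_[1]) j c, Nat.descFactorial_succ, hm,
      show n - (j + 1) = m by omega, mul_comm]


lemma bernsteinPolynomial_eval_nonneg (m k : ℕ) {x : ℝ} (hx : x ∈ Set.Icc (0 : ℝ) 1) :
    0 ≤ (bernsteinPolynomial ℝ m k).eval x := by
  obtain ⟨hx0, hx1⟩ := hx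
  have : 0 ≤ 1 - x := sub_nonneg.mpr hx1
  simp only [bernsteinPolynomial, eval_mul, eval_pow, eval_natCast, eval_X, eval_sub, eval_one]
  positivity

lemma abs_eval_bernsteinSum_le {n : ℕ} {c : ℕ → ℝ} {C : ℝ} (hC : ∀ k ≤ n, |c k| ≤ C) {x : ℝ}
    (hx : x ∈ Set.Icc (0 : ℝ) 1) : |(bernsteinSum n c).eval x| ≤ C := by
  have hpos := fun k => bernsteinPolynomial_eval_nonneg n k hx
  calc |(bernsteinSum n c).eval x|
      ≤ ∑ k ∈ range (n + 1), |c k| * (bernsteinPolynomial ℝ n k).eval x := by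
        simp only [bernsteinSum, eval_finsetSum, eval_smul, smul_eq_mul]
        refine (abs_sum_le_sum_abs _ _).trans_eq (sum_congr rfl fun k _ => ?_)
        rw [abs_mul, abs_of_nonneg (hpos k)]
    _ ≤ ∑ k ∈ range (n + 1), C * (bernsteinPolynomial ℝ n k).eval x := by
        gcongr with k hk
        · exact hpos k
        · exact hC k (Nat.lt_succ_iff.mp (mem_range.mp hk))
    _ = C := by rw [← mul_sum, ← eval_finsetSum, bernsteinPolynomial.sum, eval_one, mul_one]

lemma abs_iteratedDeriv_eval_bernsteinSum_le {n j : ℕ} (hj : j ≤ n) {c : ℕ → ℝ} {C : ℝ}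
    (hC : ∀ k ≤ n - j, |(Δ_[1])^[j] c k| ≤ C) {x : ℝ} (hx : x ∈ Set.Icc (0 : ℝ) 1) :
    |iteratedDeriv j (fun y => (bernsteinSum n c).eval y) x| ≤ n ^ j * C := by
  have hC0 : 0 ≤ C := (abs_nonneg _).trans (hC 0 (Nat.zero_le _))
  simp only [iteratedDeriv_eval, iterate_derivative_bernsteinSum hj, nsmul_eq_mul, eval_mul,
    eval_natCast, abs_mul, Nat.abs_cast]
  gcongr
  · exact_mod_cast Nat.descFactorial_le_pow n j
  · exact abs_eval_bernsteinSum_le hC hx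

end Bernstein

lemma abs_iteratedDeriv_eval_bernsteinSum_sub_le {j n : ℕ} (hj : j ≤ n) {f g : ℝ → ℝ}
    {b : ℕ → ℝ} {ε D : ℝ} (hb : ∀ k ≤ n, |f ((k : ℝ) / n) - b k| ≤ ε)
    (hD : ∀ y ∈ Set.Icc (0 : ℝ) (1 - (j : ℝ) / n),
      |(Δ_[(1 : ℝ) / n])^[j] (fun t => f t - g t) y| ≤ D)
    {x : ℝ} (hx : x ∈ Set.Icc (0 : ℝ) 1) :
    |iteratedDeriv j (fun y => (bernsteinSum n b).eval y) x -
        iteratedDeriv j (fun y => (bernsteinSum n fun k => g ((k : ℝ) / n)).eval y) x| ≤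
      (2 * n) ^ j * ε + n ^ j * D := by
  set sample : ℕ →+ ℝ := (AddMonoidHom.mulRight (n : ℝ)⁻¹).comp (Nat.castAddMonoidHom ℝ)
  have hsample (k : ℕ) : sample k = k / n := by simp [sample, div_eq_mul_inv]
  have hsplit : (b - fun k : ℕ => g ((k : ℝ) / n)) =
      (b - fun k : ℕ => f ((k : ℝ) / n)) + (fun t : ℝ => f t - g t) ∘ sample := by
    ext k
    simp only [Pi.sub_apply, Pi.add_apply, Function.comp_apply, hsample]
    ring
  have hcoeff (k : ℕ) (hk : k ≤ n - j) :
      |(Δ_[1])^[j] (b - fun k : ℕ => g ((k : ℝ) / n)) k| ≤ 2 ^ j * ε + D := by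
    rw [hsplit, fwdDiff_iter_add, Pi.add_apply, fwdDiff_iter_comp_addMonoidHom, hsample, hsample,
      Nat.cast_one]
    refine (abs_add_le _ _).trans (add_le_add ?_ (hD _ ⟨by positivity, ?_⟩))
    · refine abs_fwdDiff_iter_le _ _ _ _ fun i hi => ?_
      rw [Pi.sub_apply, abs_sub_comm, smul_eq_mul, mul_one]
      exact hb (k + i) (by omega)
    · rw [le_sub_iff_add_le, ← add_div]
      exact div_le_one_of_le₀ (by exact_mod_cast (by omega : k + j ≤ n)) (Nat.cast_nonneg n)
  calc _ = |iteratedDeriv j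
          (fun y => (bernsteinSum n (b - fun k : ℕ => g ((k : ℝ) / n))).eval y) x| := by
        simp only [iteratedDeriv_eval]
        rw [bernsteinSum_sub, iterate_derivative_sub, eval_sub]
    _ ≤ n ^ j * (2 ^ j * ε + D) := abs_iteratedDeriv_eval_bernsteinSum_le hj hcoeff hx
    _ = (2 * n) ^ j * ε + n ^ j * D := by ring

theorem quasi_linearity_estimate_general (s n : ℕ) (hn : s + 1 ≤ n)
    (f g : ℝ → ℝ) (hf : ContDiff ℝ s f) (hg : ContDiff ℝ (s + 1) g)
    (b : ℕ → ℝ) (M : ℝ)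
    (hb : ∀ k ≤ n, |f ((k : ℝ) / n) - b k| ≤ M / (n : ℝ) ^ s) :
    (∀ D : ℝ, (∀ y ∈ Set.Icc (0 : ℝ) (1 - ((s : ℝ) + 1) / n),
        |fwdDiffStep (s + 1) (1 / n) (fun t => f t - g t) y| ≤ D) →
      ∀ x ∈ Set.Icc (0 : ℝ) 1,
        |iteratedDeriv (s + 1)
            (fun y : ℝ => ∑ k ∈ Finset.range (n + 1),
              b k * (n.choose k : ℝ) * y ^ k * (1 - y) ^ (n - k)) x -
          iteratedDeriv (s + 1)
            (fun y : ℝ => ∑ k ∈ Finset.range (n + 1),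
              g ((k : ℝ) / n) * (n.choose k : ℝ) * y ^ k * (1 - y) ^ (n - k)) x| ≤
        (2 * (n : ℝ)) ^ (s + 1) * (M / (n : ℝ) ^ s) + (n : ℝ) ^ (s + 1) * D) ∧
    (∀ E : ℝ, (∀ y ∈ Set.Icc (0 : ℝ) 1, |iteratedDeriv s f y - iteratedDeriv s g y| ≤ E) →
      ∀ x ∈ Set.Icc (0 : ℝ) 1,
        |iteratedDeriv (s + 1)
            (fun y : ℝ => ∑ k ∈ Finset.range (n + 1),
              b k * (n.choose k : ℝ) * y ^ k * (1 - y) ^ (n - k)) x -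
          iteratedDeriv (s + 1)
            (fun y : ℝ => ∑ k ∈ Finset.range (n + 1),
              g ((k : ℝ) / n) * (n.choose k : ℝ) * y ^ k * (1 - y) ^ (n - k)) x| ≤
        (2 * (n : ℝ)) ^ (s + 1) * (M / (n : ℝ) ^ s) + 2 * (n : ℝ) * E) := by
  have hQ (c : ℕ → ℝ) : (fun y : ℝ => ∑ k ∈ range (n + 1),
      c k * (n.choose k : ℝ) * y ^ k * (1 - y) ^ (n - k)) = fun y => (bernsteinSum n c).eval y :=
    funext fun y => (eval_bernsteinSum n c y).symm
  rw [hQ b, hQ fun k => g ((k : ℝ) / n)]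
  refine ⟨fun D hD x hx => ?_, fun E hE x hx => ?_⟩
  · refine abs_iteratedDeriv_eval_bernsteinSum_sub_le hn hb (fun y hy => ?_) hx
    rw [← fwdDiffStep_eq_fwdDiff_iter]
    exact hD y (by exact_mod_cast hy)
  have hgs : ContDiff ℝ s g := hg.of_le (by exact_mod_cast le_self_add)
  have hdiff (y : ℝ) (hy : y ∈ Set.Icc (0 : ℝ) (1 - ((s + 1 : ℕ) : ℝ) / n)) :
      |(Δ_[(1 : ℝ) / n])^[s + 1] (fun t => f t - g t) y| ≤ 2 * E * (1 / n) ^ s := by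
    refine abs_fwdDiff_iter_succ_le_of_abs_iteratedDeriv_le (hf.sub hgs) (by positivity)
      fun t ht => ?_
    rw [iteratedDeriv_fun_sub hf.contDiffAt hgs.contDiffAt]
    have : ((s : ℝ) + 1) * (1 / n) = ((s + 1 : ℕ) : ℝ) / n := by push_cast; ring
    exact hE t ⟨hy.1.trans ht.1, by linarith [hy.2, ht.2]⟩
  have hn0 : (n : ℝ) ≠ 0 := Nat.cast_ne_zero.mpr (by omega)
  calc _ ≤ _ := abs_iteratedDeriv_eval_bernsteinSum_sub_le hn hb hdiff hx
    _ = _ := by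
      rw [one_div_pow, pow_succ (n : ℝ)]
      field_simp

theorem quasi_linearity_estimate (s n : ℕ) (hs : 1 ≤ s) (hn : s + 1 ≤ n)
    (f g : ℝ → ℝ) (hf : ContDiff ℝ s f) (hg : ContDiff ℝ (s + 1) g)
    (b : ℕ → ℝ) (M : ℝ) (hM : 0 < M)
    (hb : ∀ k ≤ n, |f ((k : ℝ) / n) - b k| ≤ M / (n : ℝ) ^ s) :
    (∀ D : ℝ, (∀ y ∈ Set.Icc (0 : ℝ) (1 - ((s : ℝ) + 1) / n),
        |fwdDiffStep (s + 1) (1 / n) (fun t => f t - g t) y| ≤ D) →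
      ∀ x ∈ Set.Icc (0 : ℝ) 1,
        |iteratedDeriv (s + 1)
            (fun y : ℝ => ∑ k ∈ Finset.range (n + 1),
              b k * (n.choose k : ℝ) * y ^ k * (1 - y) ^ (n - k)) x -
          iteratedDeriv (s + 1)
            (fun y : ℝ => ∑ k ∈ Finset.range (n + 1),
              g ((k : ℝ) / n) * (n.choose k : ℝ) * y ^ k * (1 - y) ^ (n - k)) x| ≤
        (2 * (n : ℝ)) ^ (s + 1) * (M / (n : ℝ) ^ s) + (n : ℝ) ^ (s + 1) * D) ∧
    (∀ E : ℝ, (∀ y ∈ Set.Icc (0 : ℝ) 1, |iteratedDeriv s f y - iteratedDeriv s g y| ≤ E) →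
      ∀ x ∈ Set.Icc (0 : ℝ) 1,
        |iteratedDeriv (s + 1)
            (fun y : ℝ => ∑ k ∈ Finset.range (n + 1),
              b k * (n.choose k : ℝ) * y ^ k * (1 - y) ^ (n - k)) x -
          iteratedDeriv (s + 1)
            (fun y : ℝ => ∑ k ∈ Finset.range (n + 1),
              g ((k : ℝ) / n) * (n.choose k : ℝ) * y ^ k * (1 - y) ^ (n - k)) x| ≤
        (2 * (n : ℝ)) ^ (s + 1) * (M / (n : ℝ) ^ s) + 2 * (n : ℝ) * E) :=
  quasi_linearity_estimate_general s n hn f g hf hg b M hb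
end
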